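/- arXiv:1906.09008 — 2 statements merged into one kernel-verified Lean document; each statement's English description precedes it below -/
import Mathlib

section
/- For h > 0: I_{0,3}(h) = (3/4) h I_{0,1}(h) - (1/2) r^7, where r = sqrt((sqrt(1+4h)-1)/2) and I_{i,j}(h) = 2∫_r^{√h} x^i (h-x^2)^{j/2} dx. -/
/-!
Since `d/dx [x (h - x²)^{3/2}] = 4 (h - x²)^{3/2} - 3h (h - x²)^{1/2}`, the reduction formula
holds on `[a, √h]` for any `a` with `a² ≤ h`, with boundary term `a (h - a²)^{3/2} / 4`.
For `a = r` we have `h - r² = r⁴`, and the boundary term becomes `r⁷ / 4`.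
-/

open Real intervalIntegral

theorem hasDerivAt_mul_sqrt_sub_sq_pow_three {h x : ℝ} (hx : x ^ 2 < h) :
    HasDerivAt (fun y => y * √(h - y ^ 2) ^ 3) (4 * √(h - x ^ 2) ^ 3 - 3 * h * √(h - x ^ 2)) x := by
  have hpos : 0 < h - x ^ 2 := by linarith
  have hinner : HasDerivAt (fun y : ℝ => h - y ^ 2) (-(2 * x)) x := by
    simpa using (hasDerivAt_pow 2 x).const_sub h
  have hroot : HasDerivAt (fun y => √(h - y ^ 2)) (-(2 * x) / (2 * √(h - x ^ 2))) x :=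
    hinner.sqrt hpos.ne'
  refine ((hasDerivAt_id x).fun_mul (hroot.fun_pow 3)).congr_deriv ?_
  have hsq : √(h - x ^ 2) ^ 2 = h - x ^ 2 := sq_sqrt hpos.le
  have hsqrt_ne : √(h - x ^ 2) ≠ 0 := (sqrt_pos.mpr hpos).ne'
  field_simp
  simp only [id, Nat.cast_ofNat]
  linear_combination (-3 * √(h - x ^ 2) ^ 2) * hsq

theorem integral_sqrt_sub_sq_pow_three {h a : ℝ} (ha : a ^ 2 ≤ h) :
    ∫ x in a..√h, √(h - x ^ 2) ^ 3 =
      3 / 4 * h * (∫ x in a..√h, √(h - x ^ 2)) - a * √(h - a ^ 2) ^ 3 / 4 := by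
  have hsqrt_h : √h ^ 2 = h := sq_sqrt ((sq_nonneg a).trans ha)
  have hcont : Continuous fun x : ℝ => √(h - x ^ 2) := by fun_prop
  have hcont3 : Continuous fun x : ℝ => √(h - x ^ 2) ^ 3 := by fun_prop
  have hderiv : ∀ x ∈ Set.Ioo a √h, HasDerivAt (fun y => y * √(h - y ^ 2) ^ 3)
      (4 * √(h - x ^ 2) ^ 3 - 3 * h * √(h - x ^ 2)) x := by
    rintro x ⟨hax, hxh⟩
    refine hasDerivAt_mul_sqrt_sub_sq_pow_three ?_
    rw [← hsqrt_h]
    exact sq_lt_sq' ((neg_sqrt_le_of_sq_le ha).trans_lt hax) hxh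
  have hftc := integral_eq_sub_of_hasDeriv_right_of_le (le_sqrt_of_sq_le ha) (by fun_prop)
    (fun x hx => (hderiv x hx).hasDerivWithinAt)
    ((hcont3.intervalIntegrable _ _).const_mul 4 |>.sub
      ((hcont.intervalIntegrable _ _).const_mul (3 * h)))
  rw [integral_sub ((hcont3.intervalIntegrable _ _).const_mul 4)
      ((hcont.intervalIntegrable _ _).const_mul (3 * h)), integral_const_mul, integral_const_mul,
    hsqrt_h, sub_self, sqrt_zero] at hftc
  linear_combination hftc / 4

theorem sq_add_pow_four_of_eq_sqrt {h r : ℝ} (hh : 0 ≤ h)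
    (hr : r = √((√(1 + 4 * h) - 1) / 2)) : r ^ 2 + r ^ 4 = h := by
  have hs : √(1 + 4 * h) ^ 2 = 1 + 4 * h := sq_sqrt (by linarith)
  have hr2 : r ^ 2 = (√(1 + 4 * h) - 1) / 2 := by
    rw [hr]; exact sq_sqrt (by linarith [one_le_sqrt.mpr (by linarith : 1 ≤ 1 + 4 * h)])
  linear_combination (1 + r ^ 2 + (√(1 + 4 * h) - 1) / 2) * hr2 + hs / 4

theorem stmt_5 (h : ℝ) (hh : 0 < h)
    (r : ℝ) (hr : r = Real.sqrt ((Real.sqrt (1 + 4 * h) - 1) / 2)) :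
    (2 * ∫ x in r..(Real.sqrt h), Real.sqrt (h - x ^ 2) ^ 3) =
      (3 / 4) * h * (2 * ∫ x in r..(Real.sqrt h), Real.sqrt (h - x ^ 2)) -
        (1 / 2) * r ^ 7 := by
  have hsum := sq_add_pow_four_of_eq_sqrt hh.le hr
  have hboundary : √(h - r ^ 2) = r ^ 2 := by
    rw [← hsum, add_sub_cancel_left, show r ^ 4 = (r ^ 2) ^ 2 by ring, sqrt_sq (sq_nonneg r)]
  rw [integral_sqrt_sub_sq_pow_three (hsum ▸ le_add_of_nonneg_right (by positivity)), hboundary]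
  ring
end

section
/- Let F(u) = ∫_0^{1/sqrt(1+u^2)} sqrt(1-t^2) dt and let P be a real polynomial of degree at most 2n+1 and Q a real polynomial of degree at most ⌊(n-1)/2⌋ (n ≥ 2). Then M(u) = u·P(u) + (u^4+u^2)·Q(u^4+u^2)·F(u) has at most 2n + 5⌊(n-1)/2⌋ + 4 zeros (with multiplicity) in (0,∞). -/
/-!
Write `m = ⌊(n-1)/2⌋`, `q(u) = Q(u⁴+u²)` and `D = (u⁴+u²) q`. Where `D ≠ 0`, `M / D = u P / D + F`
has derivative `R / ((u³+u)² q²)` for a polynomial `R` of degree at most `2n + 4m + 3`. Between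
two consecutive positive zeros of `M` there is therefore a zero of `D` or, by Rolle's theorem, a
zero of `R` (a common zero of `D` and `M` is itself a zero of `R`). So `M` has at most
`m + (2n + 4m + 3) + 1` positive zeros, the `m` because `u ↦ u⁴ + u²` is injective on `(0, ∞)`.

That `R ≠ 0` is the one non-formal point: if `R = 0`, then `2 u P / D + u / (1 + u²)` would be a
rational antiderivative of `1 / (1 + u²)`, which is impossible because `1 / (1 + u²)` has a nonzero
residue at `i`.
-/

open Set Polynomial

namespace Polynomial

theorem wronskian_mul_mul {R : Type*} [CommRing R] (g a b : R[X]) :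
    wronskian (g * a) (g * b) = g ^ 2 * wronskian a b := by
  simp only [wronskian, derivative_mul]
  ring

theorem wronskian_map {R S : Type*} [CommRing R] [CommRing S] (f : R →+* S) (a b : R[X]) :
    wronskian (a.map f) (b.map f) = (wronskian a b).map f := by
  simp [wronskian, derivative_map]

variable {K : Type*} [Field K] [CharZero K]

theorem sq_ne_X_sub_C_mul_wronskian_of_isCoprime {c d h : K[X]} {z : K} (hcop : IsCoprime d c)
    (hd : d ≠ 0) (hz : h.eval z ≠ 0) : d ^ 2 ≠ (X - C z) * h * wronskian d c := by
  intro hid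
  have hdz : d.IsRoot z := by
    simpa [IsRoot] using congrArg (eval z) hid
  have hcz : c.eval z ≠ 0 := fun hcz =>
    not_isUnit_X_sub_C z <| hcop.isUnit_of_dvd' (dvd_iff_isRoot.2 hdz) (dvd_iff_isRoot.2 hcz)
  obtain ⟨e, hde, he⟩ := exists_eq_pow_rootMultiplicity_mul_and_not_dvd d hd z
  obtain ⟨j, hj⟩ := Nat.exists_eq_add_one.2 ((rootMultiplicity_pos hd).2 hdz)
  rw [hj] at hde
  have hez : e.eval z ≠ 0 := fun hez => he (dvd_iff_isRoot.2 hez)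
  set t : K[X] := X - C z
  -- after cancelling `t ^ (j + 1)`, the right side is `-(j + 1) h(z) c(z) e(z) ≠ 0` at `z`
  have hcancel : t ^ (j + 1) * e ^ 2 = h * (t * wronskian e c - C ((j : K) + 1) * e * c) := by
    refine mul_left_cancel₀ (pow_ne_zero (j + 1) (X_sub_C_ne_zero z)) ?_
    have ht : derivative t = 1 := by simp [t]
    rw [hde] at hid
    simp only [wronskian, derivative_mul, derivative_pow, ht, mul_one,
      Nat.add_sub_cancel, Nat.cast_add_one] at hid ⊢
    linear_combination hid
  simpa [t, hcz, hez, hz, Nat.cast_add_one_ne_zero] using congrArg (eval z) hcancel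

/-- The derivative `(c / d)' = W(d, c) / d²` of a rational function never has a simple pole. -/
theorem sq_ne_X_sub_C_mul_wronskian {c d h : K[X]} {z : K} (hd : d ≠ 0) (hz : h.eval z ≠ 0) :
    d ^ 2 ≠ (X - C z) * h * wronskian d c := by
  classical
  intro hid
  set g := gcd d c
  have hg : g ≠ 0 := gcd_ne_zero_of_left hd
  have hdg : d = g * (d / g) := (EuclideanDomain.mul_div_cancel' hg (gcd_dvd_left d c)).symm
  have hcg : c = g * (c / g) := (EuclideanDomain.mul_div_cancel' hg (gcd_dvd_right d c)).symm
  refine sq_ne_X_sub_C_mul_wronskian_of_isCoprime (isCoprime_div_gcd_div_gcd_of_gcd_ne_zero hg)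
    (fun h0 => hd (by rw [hdg, h0, mul_zero])) hz (mul_left_cancel₀ (pow_ne_zero 2 hg) ?_)
  rw [← mul_pow, ← hdg, hid, hdg, hcg, wronskian_mul_mul, ← hdg, ← hcg]
  ring

/-- `(c / d)' = 1 / (X² + 1)` has no solution in `ℝ(X)`. -/
theorem sq_ne_X_sq_add_one_mul_wronskian (c : ℝ[X]) {d : ℝ[X]} (hd : d ≠ 0) :
    d ^ 2 ≠ (X ^ 2 + 1) * wronskian d c := by
  intro hid
  have hfactor : (X ^ 2 + 1 : ℂ[X]) = (X - C Complex.I) * (X + C Complex.I) := by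
    have hI : (C Complex.I) ^ 2 = -1 := by rw [← C_pow, Complex.I_sq, C_neg, C_1]
    linear_combination hI
  refine sq_ne_X_sub_C_mul_wronskian (z := Complex.I) (h := X + C Complex.I)
    (c := c.map Complex.ofRealHom) ((Polynomial.map_ne_zero_iff Complex.ofRealHom.injective).2 hd)
    (by simp) ?_
  rw [← hfactor, wronskian_map, ← Polynomial.map_pow, hid]
  simp

end Polynomial

theorem hasDerivAt_integral_sqrt_one_sub_sq {u : ℝ} (hu : 0 < u) :
    HasDerivAt (fun u => ∫ t in (0 : ℝ)..1 / √(1 + u ^ 2), √(1 - t ^ 2))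
      (-(u ^ 2 / (1 + u ^ 2) ^ 2)) u := by
  have hftc (x : ℝ) : HasDerivAt (fun x => ∫ t in (0 : ℝ)..x, √(1 - t ^ 2)) (√(1 - x ^ 2)) x :=
    (Continuous.integral_hasStrictDerivAt (by fun_prop) 0 x).hasDerivAt
  have hpos : 0 < 1 + u ^ 2 := by positivity
  set s := √(1 + u ^ 2)
  have hs : 0 < s := Real.sqrt_pos.2 hpos
  have hs2 : s ^ 2 = 1 + u ^ 2 := Real.sq_sqrt hpos.le
  have hinner : HasDerivAt (fun u => 1 / √(1 + u ^ 2)) (-(u / s) / s ^ 2) u := by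
    have hsqrt : HasDerivAt (fun u => √(1 + u ^ 2)) (u / s) u :=
      (((hasDerivAt_pow 2 u).const_add 1).sqrt hpos.ne').congr_deriv (by field_simp; ring)
    simp only [one_div]
    exact hsqrt.inv hs.ne'
  have hsqrt : √(1 - (1 / s) ^ 2) = u / s := by
    rw [← Real.sqrt_sq (div_pos hu hs).le]
    congr 1
    field_simp
    linarith
  refine ((hftc _).comp u hinner).congr_deriv ?_
  rw [hsqrt]
  field_simp
  rw [← hs2]
  ring

theorem finite_and_ncard_le_of_forall_lt {Z A B : Set ℝ} (hA : A.Finite) (hB : B.Finite)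
    (h : ∀ x ∈ Z, ∀ y ∈ Z, x < y → (∃ s ∈ A, x < s ∧ s ≤ y) ∨ ∃ s ∈ B, x ≤ s ∧ s < y) :
    Z.Finite ∧ Z.ncard ≤ A.ncard + B.ncard + 1 := by
  set N : ℝ → ℕ := fun y => (A ∩ Iic y).ncard + (B ∩ Iio y).ncard
  have hmono : StrictMonoOn N Z := by
    intro x hx y hy hxy
    have hAxy : A ∩ Iic x ⊆ A ∩ Iic y := inter_subset_inter_right _ (Iic_subset_Iic.2 hxy.le)
    have hBxy : B ∩ Iio x ⊆ B ∩ Iio y := inter_subset_inter_right _ (Iio_subset_Iio hxy.le)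
    have hAle := ncard_le_ncard hAxy (hA.inter_of_left _)
    have hBle := ncard_le_ncard hBxy (hB.inter_of_left _)
    rcases h x hx y hy hxy with ⟨s, hsA, hxs, hsy⟩ | ⟨s, hsB, hxs, hsy⟩
    · have := ncard_lt_ncard (ssubset_of_subset_not_subset hAxy
        fun hsub => (hsub ⟨hsA, hsy⟩).2.not_gt hxs) (hA.inter_of_left _)
      simp only [N]
      omega
    · have := ncard_lt_ncard (ssubset_of_subset_not_subset hBxy
        fun hsub => (hsub ⟨hsB, hsy⟩).2.not_ge hxs) (hB.inter_of_left _)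
      simp only [N]
      omega
  have hmaps : MapsTo N Z (Iic (A.ncard + B.ncard)) := fun y _ =>
    add_le_add (ncard_le_ncard inter_subset_left hA) (ncard_le_ncard inter_subset_left hB)
  refine ⟨(finite_Iic _).of_injOn hmaps hmono.injOn, ?_⟩
  simpa using ncard_le_ncard_of_injOn N hmaps hmono.injOn (finite_Iic _)

theorem Polynomial.finite_and_ncard_le_natDegree_of_eval_eq_zero {R : Type*} [CommRing R]
    [IsDomain R] {p : R[X]} (hp : p ≠ 0) {S : Set R} (hS : ∀ x ∈ S, p.eval x = 0) :
    S.Finite ∧ S.ncard ≤ p.natDegree := by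
  have hsub : S ⊆ p.rootSet R := fun x hx => by simp [mem_rootSet, hp, hS x hx]
  exact ⟨(p.rootSet_finite R).subset hsub,
    (ncard_le_ncard hsub (p.rootSet_finite R)).trans (p.ncard_rootSet_le R)⟩

/-- The paper's `R`: `(M / ((X⁴ + X²) q))' = R / ((X³ + X)² q²)`. -/
noncomputable def rolleNumerator (P q : ℝ[X]) : ℝ[X] :=
  (X * derivative P - P) * ((X ^ 2 + 1) * q) - X * P * derivative ((X ^ 2 + 1) * q) - X ^ 4 * q ^ 2

theorem X_sq_add_one_mul_wronskian (P q : ℝ[X]) :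
    (X ^ 2 + 1) * wronskian (X * (X ^ 2 + 1) * q) (2 * P + X ^ 2 * q) =
      (X * (X ^ 2 + 1) * q) ^ 2 + 2 * (X ^ 2 + 1) * rolleNumerator P q := by
  simp only [wronskian, rolleNumerator, derivative_mul, derivative_add, derivative_X_pow,
    derivative_X, derivative_one, derivative_ofNat, Nat.cast_ofNat, map_ofNat]
  ring

theorem natDegree_rolleNumerator_le {P q : ℝ[X]} {a b : ℕ} (hP : P.natDegree ≤ a)
    (hq : q.natDegree ≤ b) (hab : b + 2 ≤ a) :
    (rolleNumerator P q).natDegree ≤ a + b + 2 := by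
  have hS : ((X ^ 2 + 1) * q).natDegree ≤ b + 2 := by
    compute_degree
    omega
  unfold rolleNumerator
  generalize (X ^ 2 + 1) * q = S at hS
  compute_degree
  all_goals omega

theorem eval_rolleNumerator_eq_zero {P q : ℝ[X]} {x : ℝ} (hP : P.eval x = 0)
    (hq : q.eval x = 0) : (rolleNumerator P q).eval x = 0 := by
  simp [rolleNumerator, hP, hq]

theorem hasDerivAt_div_rolleNumerator {F : ℝ → ℝ} {P q : ℝ[X]} {x : ℝ}
    (hF : HasDerivAt F (-(x ^ 2 / (1 + x ^ 2) ^ 2)) x) (hD : ((X ^ 4 + X ^ 2) * q).eval x ≠ 0) :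
    HasDerivAt (fun y => (y * P.eval y + ((X ^ 4 + X ^ 2) * q).eval y * F y) /
        ((X ^ 4 + X ^ 2) * q).eval y)
      (x ^ 2 * (rolleNumerator P q).eval x / ((X ^ 4 + X ^ 2) * q).eval x ^ 2) x := by
  set D := (X ^ 4 + X ^ 2) * q
  have hquot := (((X * P).hasDerivAt x).div (D.hasDerivAt x) hD).add hF
  have heq : (fun y => (X * P).eval y / D.eval y + F y) =ᶠ[nhds x]
      fun y => (y * P.eval y + D.eval y * F y) / D.eval y := by
    filter_upwards [D.continuous.continuousAt.eventually_ne hD] with y hy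
    field_simp
    simp
  refine (hquot.congr_of_eventuallyEq heq.symm).congr_deriv ?_
  have hx : 1 + x ^ 2 ≠ 0 := by positivity
  field_simp
  simp only [D, rolleNumerator, derivative_mul, derivative_X_pow_succ,
    derivative_X, derivative_one, eval_add, eval_sub, eval_mul, eval_pow, eval_X, eval_C,
    eval_one, map_add, map_one, Nat.cast_ofNat, Nat.cast_one, pow_one, one_mul, add_zero]
  ring

theorem rolleNumerator_ne_zero (P : ℝ[X]) {q : ℝ[X]} (hq : q ≠ 0) : rolleNumerator P q ≠ 0 := by
  intro h
  have hX : (X ^ 2 + 1 : ℝ[X]) ≠ 0 := by simpa using X_pow_add_C_ne_zero two_pos (1 : ℝ)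
  have hd : X * (X ^ 2 + 1) * q ≠ 0 := mul_ne_zero (mul_ne_zero X_ne_zero hX) hq
  refine sq_ne_X_sq_add_one_mul_wronskian (2 * P + X ^ 2 * q) hd ?_
  rw [X_sq_add_one_mul_wronskian, h]
  ring

theorem exists_weight_root_or_rolleNumerator_root {F : ℝ → ℝ}
    (hF : ∀ u, 0 < u → HasDerivAt F (-(u ^ 2 / (1 + u ^ 2) ^ 2)) u) {P q : ℝ[X]} {x y : ℝ}
    (hx : 0 < x) (hxy : x < y) (hMx : x * P.eval x + ((X ^ 4 + X ^ 2) * q).eval x * F x = 0)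
    (hMy : y * P.eval y + ((X ^ 4 + X ^ 2) * q).eval y * F y = 0) :
    (∃ s, x < s ∧ s ≤ y ∧ ((X ^ 4 + X ^ 2) * q).eval s = 0) ∨
      ∃ s, x ≤ s ∧ s < y ∧ (rolleNumerator P q).eval s = 0 := by
  set D := (X ^ 4 + X ^ 2) * q
  by_cases hDroot : ∃ s, x < s ∧ s ≤ y ∧ D.eval s = 0
  · exact Or.inl hDroot
  push Not at hDroot
  right
  by_cases hDx : D.eval x = 0
  · have hqx : q.eval x = 0 := by simpa [D, hx.ne', (by positivity : x ^ 4 + x ^ 2 ≠ 0)] using hDx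
    have hPx : P.eval x = 0 := by simpa [hDx, hx.ne'] using hMx
    exact ⟨x, le_rfl, hxy, eval_rolleNumerator_eq_zero hPx hqx⟩
  have hD : ∀ s ∈ Icc x y, D.eval s ≠ 0 := fun s hs =>
    hs.1.eq_or_lt.elim (fun h => h ▸ hDx) fun h => hDroot s h hs.2
  have hderiv : ∀ s ∈ Icc x y, HasDerivAt (fun y => (y * P.eval y + D.eval y * F y) / D.eval y)
      (s ^ 2 * (rolleNumerator P q).eval s / D.eval s ^ 2) s := fun s hs =>
    hasDerivAt_div_rolleNumerator (hF s (hx.trans_le hs.1)) (hD s hs)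
  obtain ⟨ξ, hξ, hξ0⟩ := exists_hasDerivAt_eq_zero hxy
    (fun s hs => (hderiv s hs).continuousAt.continuousWithinAt) (by simp [hMx, hMy])
    fun s hs => hderiv s (Ioo_subset_Icc_self hs)
  refine ⟨ξ, hξ.1.le, hξ.2, ?_⟩
  have hξpos : ξ ≠ 0 := (hx.trans hξ.1).ne'
  simpa [hξpos, hD ξ (Ioo_subset_Icc_self hξ)] using hξ0

theorem finite_and_ncard_pos_roots_mul_comp_le {Q : ℝ[X]} (hQ : Q ≠ 0) :
    {s | 0 < s ∧ ((X ^ 4 + X ^ 2) * Q.comp (X ^ 4 + X ^ 2)).eval s = 0}.Finite ∧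
      {s | 0 < s ∧ ((X ^ 4 + X ^ 2) * Q.comp (X ^ 4 + X ^ 2)).eval s = 0}.ncard ≤ Q.natDegree := by
  obtain ⟨hfin, hcard⟩ :=
    finite_and_ncard_le_natDegree_of_eval_eq_zero hQ (S := {x | Q.eval x = 0}) fun _ h => h
  have hmaps : MapsTo (fun s : ℝ => s ^ 4 + s ^ 2)
      {s | 0 < s ∧ ((X ^ 4 + X ^ 2) * Q.comp (X ^ 4 + X ^ 2)).eval s = 0} {x | Q.eval x = 0} := by
    rintro s ⟨hs, hroot⟩
    simpa [eval_comp, (by positivity : s ^ 4 + s ^ 2 ≠ 0)] using hroot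
  have hinj : InjOn (fun s : ℝ => s ^ 4 + s ^ 2)
      {s | 0 < s ∧ ((X ^ 4 + X ^ 2) * Q.comp (X ^ 4 + X ^ 2)).eval s = 0} :=
    (StrictMonoOn.add (fun a ha b _ hab => pow_lt_pow_left₀ hab ha.1.le (by norm_num))
      fun a ha b _ hab => pow_lt_pow_left₀ hab ha.1.le (by norm_num)).injOn
  exact ⟨hfin.of_injOn hmaps hinj, (ncard_le_ncard_of_injOn _ hmaps hinj hfin).trans hcard⟩

theorem stmt_16
    (F : ℝ → ℝ)
    (hF : ∀ u, F u = ∫ t in (0:ℝ)..(1 / Real.sqrt (1 + u ^ 2)),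
      Real.sqrt (1 - t ^ 2))
    (n : ℕ) (hn : 2 ≤ n)
    (P Q : Polynomial ℝ)
    (hP : P.natDegree ≤ 2 * n + 1) (hQ : Q.natDegree ≤ (n - 1) / 2)
    (hPQ : ¬ (P = 0 ∧ Q = 0))
    (M : ℝ → ℝ)
    (hM : ∀ u, M u = u * P.eval u +
      (u ^ 4 + u ^ 2) * Q.eval (u ^ 4 + u ^ 2) * F u) :
    {u : ℝ | u ∈ Set.Ioi (0:ℝ) ∧ M u = 0}.Finite ∧
    {u : ℝ | u ∈ Set.Ioi (0:ℝ) ∧ M u = 0}.ncard ≤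
      2 * n + 5 * ((n - 1) / 2) + 4 := by
  by_cases hQ0 : Q = 0
  · have hP0 : P ≠ 0 := fun hP0 => hPQ ⟨hP0, hQ0⟩
    obtain ⟨hfin, hcard⟩ := finite_and_ncard_le_natDegree_of_eval_eq_zero hP0
      (S := {u : ℝ | u ∈ Set.Ioi (0:ℝ) ∧ M u = 0}) fun u ⟨hu, hMu⟩ => by
        simpa [hM, hQ0, (mem_Ioi.1 hu).ne'] using hMu
    exact ⟨hfin, by omega⟩
  set q := Q.comp (X ^ 4 + X ^ 2)
  have hq : q ≠ 0 := by
    have hX : (X ^ 4 + X ^ 2 : ℝ[X]) ≠ 0 := fun h => by simpa using congrArg (eval 1) h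
    simp [q, comp_eq_zero_iff, hQ0, hX]
  have hqdeg : q.natDegree ≤ 4 * ((n - 1) / 2) := by
    have h4 : (X ^ 4 + X ^ 2 : ℝ[X]).natDegree ≤ 4 := by compute_degree!
    nlinarith [natDegree_comp_le (p := Q) (q := X ^ 4 + X ^ 2)]
  have hFd : ∀ u, 0 < u → HasDerivAt F (-(u ^ 2 / (1 + u ^ 2) ^ 2)) u := by
    rw [funext hF]
    exact fun u hu => hasDerivAt_integral_sqrt_one_sub_sq hu
  have hMe : ∀ u, M u = u * P.eval u + ((X ^ 4 + X ^ 2) * q).eval u * F u := by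
    simp [hM, q, eval_comp, mul_assoc]
  obtain ⟨hAfin, hAcard⟩ := finite_and_ncard_pos_roots_mul_comp_le hQ0
  obtain ⟨hBfin, hBcard⟩ := finite_and_ncard_le_natDegree_of_eval_eq_zero
    (rolleNumerator_ne_zero P hq) (S := {s | 0 < s ∧ (rolleNumerator P q).eval s = 0})
    fun _ h => h.2
  have hdeg := natDegree_rolleNumerator_le hP hqdeg (by omega)
  obtain ⟨hfin, hcard⟩ := finite_and_ncard_le_of_forall_lt hAfin hBfin
    (Z := {u : ℝ | u ∈ Set.Ioi (0:ℝ) ∧ M u = 0}) fun x ⟨hx, hMx⟩ y ⟨_, hMy⟩ hxy => by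
      rw [hMe] at hMx hMy
      exact (exists_weight_root_or_rolleNumerator_root hFd hx hxy hMx hMy).imp
        (fun ⟨s, hxs, hsy, hs⟩ => ⟨s, ⟨hx.trans hxs, hs⟩, hxs, hsy⟩)
        fun ⟨s, hxs, hsy, hs⟩ => ⟨s, ⟨hx.trans_le hxs, hs⟩, hxs, hsy⟩
  exact ⟨hfin, by omega⟩
end
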